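/- arXiv:2312.05659 — 6 statements merged into one kernel-verified Lean document; each statement's English description precedes it below -/
import Mathlib

section
/- Let ε > 0, let Y ⊆ ℝ be a finite nonempty set of input labels, let g : ℝ × ℝ → ℝ be a loss such that g(·, y) is convex for every y ∈ Y, and let P be a prior on Y. Then for every ε-DP unbiased label randomizer M₀ on Y with finitely many output labels, there exists an ε-DP unbiased label randomizer M on Y with at most 2·|Y| distinct output labels such that G(M;P) ≤ G(M₀;P). In particular, the infimum of the noisy label loss over all ε-DP unbiased label randomizers with finitely many output labels is attained by a randomizer with at most 2·|Y| output labels. -/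
/-!
Keep the outputs of `M₀` but rescale output `i` by a weight `wᵢ ≥ 0`. Rescaling outputs preserves
`ε`-DP; row sums and unbiasedness are `2 * #Y` linear equations in `w`, and the noisy label loss
is linear in `w`. As the probabilities of a fixed label `y₀` are positive on every output that
occurs, the feasible weights form a polytope, and the pivoting of the simplex method reaches,
without increasing the loss, a vertex: a feasible `w` with at most `2 * #Y` nonzero entries.
-/

open Finset

section Reweighting

variable {ι V : Type*} [AddCommGroup V] [Module ℝ V]

lemma exists_neg_of_sum_mul_eq_zero {s : Finset ι} {a l : ι → ℝ} (ha : ∀ i ∈ s, 0 < a i)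
    (hl : ∑ i ∈ s, l i * a i = 0) {j : ι} (hj : j ∈ s) (hlj : l j ≠ 0) : ∃ i ∈ s, l i < 0 := by
  by_contra! hnonneg
  have := (sum_eq_zero_iff_of_nonneg fun i hi ↦
    mul_nonneg (hnonneg i hi) (ha i hi).le).mp hl j hj
  exact hlj ((mul_eq_zero.mp this).resolve_right (ha j hj).ne')

lemma exists_relation_neg_cost_nonpos {v : ι → V} {s : Finset ι} (φ : V →ₗ[ℝ] ℝ)
    (hφ : ∀ i ∈ s, 0 < φ (v i)) (hdep : ¬ LinearIndepOn ℝ v s) (c : ι → ℝ) :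
    ∃ d : ι → ℝ, ∑ i ∈ s, d i • v i = 0 ∧ (∃ i ∈ s, d i < 0) ∧ ∑ i ∈ s, d i * c i ≤ 0 := by
  obtain ⟨l, hl, j, hj, hlj⟩ : ∃ l : ι → ℝ, ∑ i ∈ s, l i • v i = 0 ∧ ∃ j ∈ s, l j ≠ 0 := by
    simpa [linearIndepOn_finset_iff] using hdep
  have hφl : ∀ l : ι → ℝ, ∑ i ∈ s, l i • v i = 0 → ∑ i ∈ s, l i * φ (v i) = 0 := fun l hl ↦ by
    simpa using congrArg φ hl
  rcases le_total (∑ i ∈ s, l i * c i) 0 with hc | hc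
  · exact ⟨l, hl, exists_neg_of_sum_mul_eq_zero hφ (hφl l hl) hj hlj, hc⟩
  · have hl' : ∑ i ∈ s, (-l) i • v i = 0 := by simp [hl]
    refine ⟨-l, hl', exists_neg_of_sum_mul_eq_zero hφ (hφl _ hl') hj (neg_ne_zero.mpr hlj), ?_⟩
    simpa using hc

/-- The ratio test of the simplex method. -/
lemma exists_add_mul_nonneg_eq_zero {s : Finset ι} {w d : ι → ℝ} (hw : ∀ i ∈ s, 0 ≤ w i)
    (hd : ∃ i ∈ s, d i < 0) :
    ∃ τ ≥ 0, ∃ j ∈ s, (∀ i ∈ s, 0 ≤ w i + τ * d i) ∧ w j + τ * d j = 0 := by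
  obtain ⟨j, hj, hjmin⟩ := (s.filter (d · < 0)).exists_min_image (fun i ↦ w i / -d i)
    (by simpa [Finset.Nonempty] using hd)
  rw [mem_filter] at hj
  have hτ := div_nonneg (hw j hj.1) (neg_nonneg.mpr hj.2.le)
  refine ⟨w j / -d j, hτ, j, hj.1, fun i hi ↦ ?_, by field_simp [hj.2.ne]; ring⟩
  rcases le_or_gt 0 (d i) with hdi | hdi
  · nlinarith [hw i hi]
  · have := hjmin i (mem_filter.mpr ⟨hi, hdi⟩)
    rw [le_div_iff₀ (neg_pos.mpr hdi)] at this
    linarith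

lemma exists_reweighting_erase [DecidableEq ι] {v : ι → V} {s : Finset ι} (φ : V →ₗ[ℝ] ℝ)
    (hφ : ∀ i ∈ s, 0 < φ (v i)) (hdep : ¬ LinearIndepOn ℝ v s) (c : ι → ℝ) {w : ι → ℝ}
    (hw : ∀ i ∈ s, 0 ≤ w i) :
    ∃ j ∈ s, ∃ w' : ι → ℝ, (∀ i ∈ s.erase j, 0 ≤ w' i) ∧
      ∑ i ∈ s.erase j, w' i • v i = ∑ i ∈ s, w i • v i ∧
      ∑ i ∈ s.erase j, w' i * c i ≤ ∑ i ∈ s, w i * c i := by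
  obtain ⟨d, hdv, hdneg, hdc⟩ := exists_relation_neg_cost_nonpos φ hφ hdep c
  obtain ⟨τ, hτ, j, hj, hnonneg, hzero⟩ := exists_add_mul_nonneg_eq_zero hw hdneg
  refine ⟨j, hj, fun i ↦ w i + τ * d i, fun i hi ↦ hnonneg i (mem_of_mem_erase hi), ?_, ?_⟩
  · rw [sum_erase _ (by simp [hzero])]
    simp [add_smul, mul_smul, sum_add_distrib, ← smul_sum, hdv]
  · rw [sum_erase _ (by simp [hzero])]
    simp only [add_mul, mul_assoc, sum_add_distrib, ← mul_sum]
    nlinarith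

/-- Conic Carathéodory's theorem, with a linear cost. -/
theorem exists_reweighting_card_le_finrank [FiniteDimensional ℝ V] (v : ι → V) (c : ι → ℝ)
    (φ : V →ₗ[ℝ] ℝ) (s : Finset ι) (hφ : ∀ i ∈ s, 0 < φ (v i)) (w : ι → ℝ)
    (hw : ∀ i ∈ s, 0 ≤ w i) :
    ∃ t ⊆ s, ∃ w' : ι → ℝ, #t ≤ Module.finrank ℝ V ∧ (∀ i ∈ t, 0 ≤ w' i) ∧
      ∑ i ∈ t, w' i • v i = ∑ i ∈ s, w i • v i ∧ ∑ i ∈ t, w' i * c i ≤ ∑ i ∈ s, w i * c i := by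
  classical
  induction s using Finset.strongInduction generalizing w with
  | H s ih =>
    by_cases hindep : LinearIndepOn ℝ v s
    · exact ⟨s, subset_rfl, w, by simpa using hindep.fintype_card_le_finrank, hw, rfl, le_rfl⟩
    obtain ⟨j, hj, w₁, hw₁, hv₁, hc₁⟩ := exists_reweighting_erase φ hφ hindep c hw
    obtain ⟨t, hts, w', ht, hw', hv', hc'⟩ := ih (s.erase j) (erase_ssubset hj)
      (fun i hi ↦ hφ i (mem_of_mem_erase hi)) w₁ hw₁
    exact ⟨t, hts.trans (erase_subset j s), w', ht, hw', hv'.trans hv₁, hc'.trans hc₁⟩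

end Reweighting

lemma Finset.sum_comp_equiv_coe {ι κ M : Type*} [Fintype κ] [AddCommMonoid M] (t : Finset ι)
    (e : κ ≃ t) (f : ι → M) : ∑ k, f (e k) = ∑ i ∈ t, f i :=
  (Equiv.sum_comp e (fun i : t ↦ f i)).trans (sum_coe_sort t f)

section Randomizer

variable {ι : Type*} (Y : Finset ℝ) (yhat : ι → ℝ) (M : ℝ → ι → ℝ)

/-- Output `i` of a randomizer `M` on `Y`, seen through the two linear constraints it enters:
its probability and its contribution to the mean, for each input label. -/
def momentVector (i : ι) : Y → ℝ × ℝ :=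
  fun y ↦ (M y i, M y i * yhat i)

lemma sum_smul_momentVector_apply (s : Finset ι) (u : ι → ℝ) (y : Y) :
    (∑ i ∈ s, u i • momentVector Y yhat M i) y =
      (∑ i ∈ s, u i * M y i, ∑ i ∈ s, u i * (M y i * yhat i)) := by
  ext <;> simp [momentVector, Finset.sum_apply, Prod.fst_sum, Prod.snd_sum]

theorem exists_reweighting_card_le_two_mul_card [Fintype ι] {ε : ℝ} (hY : Y.Nonempty)
    (hnonneg : ∀ y ∈ Y, ∀ i, 0 ≤ M y i) (hdp : ∀ i, ∀ y ∈ Y, ∀ y' ∈ Y, M y' i ≤ Real.exp ε * M y i)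
    (c : ι → ℝ) (hc : ∀ i, (∀ y ∈ Y, M y i = 0) → c i = 0) :
    ∃ t : Finset ι, ∃ w : ι → ℝ, #t ≤ 2 * #Y ∧ (∀ i ∈ t, 0 ≤ w i) ∧
      (∀ y ∈ Y, ∑ i ∈ t, w i * M y i = ∑ i, M y i) ∧
      (∀ y ∈ Y, ∑ i ∈ t, w i * (M y i * yhat i) = ∑ i, M y i * yhat i) ∧
      ∑ i ∈ t, w i * c i ≤ ∑ i, c i := by
  classical
  obtain ⟨y₀, hy₀⟩ := hY
  -- By `ε`-DP, an output that `y₀` never produces is never produced at all.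
  have hvanish : ∀ i, ¬ 0 < M y₀ i → ∀ y ∈ Y, M y i = 0 := fun i hi y hy ↦ by
    have := hdp i y₀ hy₀ y hy
    rw [le_antisymm (not_lt.mp hi) (hnonneg y₀ hy₀ i), mul_zero] at this
    exact le_antisymm this (hnonneg y hy i)
  have hv₀ : ∀ i, ¬ 0 < M y₀ i → momentVector Y yhat M i = 0 := fun i hi ↦ by
    ext y <;> simp [momentVector, hvanish i hi y y.2]
  obtain ⟨t, -, w, ht, hw, hv, hcost⟩ := exists_reweighting_card_le_finrank
    (momentVector Y yhat M) c ((LinearMap.fst ℝ ℝ ℝ).comp (LinearMap.proj ⟨y₀, hy₀⟩))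
    (univ.filter (0 < M y₀ ·)) (by simp [momentVector]) 1 (by simp)
  rw [sum_filter_of_ne fun i _ hi ↦ not_not.mp fun h ↦ hi (by simp [hv₀ i h])] at hv
  rw [sum_filter_of_ne fun i _ hi ↦ not_not.mp fun h ↦ hi (by simp [hc i (hvanish i h)])]
    at hcost
  have hmoments : ∀ y ∈ Y, ∑ i ∈ t, w i * M y i = ∑ i, M y i ∧
      ∑ i ∈ t, w i * (M y i * yhat i) = ∑ i, M y i * yhat i := fun y hy ↦ by
    simpa only [sum_smul_momentVector_apply, Pi.one_apply, one_mul, Prod.mk.injEq]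
      using congrFun hv ⟨y, hy⟩
  refine ⟨t, w, ?_, hw, fun y hy ↦ (hmoments y hy).1, fun y hy ↦ (hmoments y hy).2,
    by simpa using hcost⟩
  rw [Module.finrank_pi_fintype] at ht
  simpa [mul_comm] using ht

end Randomizer

theorem stmt_1_general
    (ε : ℝ)
    (Y : Finset ℝ) (hY : Y.Nonempty)
    (g : ℝ → ℝ → ℝ)
    (P : ℝ → ℝ)
    (m₀ : ℕ) (yhat₀ : Fin m₀ → ℝ) (M₀ : ℝ → Fin m₀ → ℝ)
    (h₀nonneg : ∀ y ∈ Y, ∀ i, 0 ≤ M₀ y i)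
    (h₀sum : ∀ y ∈ Y, ∑ i, M₀ y i = 1)
    (h₀dp : ∀ i, ∀ y ∈ Y, ∀ y' ∈ Y, M₀ y' i ≤ Real.exp ε * M₀ y i)
    (h₀unbiased : ∀ y ∈ Y, ∑ i, M₀ y i * yhat₀ i = y) :
    ∃ (m : ℕ) (yhat : Fin m → ℝ) (M : ℝ → Fin m → ℝ),
      m ≤ 2 * Y.card ∧
      (∀ y ∈ Y, ∀ i, 0 ≤ M y i) ∧
      (∀ y ∈ Y, ∑ i, M y i = 1) ∧
      (∀ i, ∀ y ∈ Y, ∀ y' ∈ Y, M y' i ≤ Real.exp ε * M y i) ∧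
      (∀ y ∈ Y, ∑ i, M y i * yhat i = y) ∧
      (∑ y ∈ Y, P y * ∑ i, M y i * g (yhat i) y) ≤
        (∑ y ∈ Y, P y * ∑ i, M₀ y i * g (yhat₀ i) y) := by
  set c : Fin m₀ → ℝ := fun i ↦ ∑ y ∈ Y, P y * (M₀ y i * g (yhat₀ i) y)
  obtain ⟨t, w, ht, hw, hsum, hmean, hcost⟩ :=
    exists_reweighting_card_le_two_mul_card Y yhat₀ M₀ hY h₀nonneg h₀dp c
      fun i hi ↦ sum_eq_zero fun y hy ↦ by simp [hi y hy]
  have e : Fin #t ≃ t := t.equivFin.symm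
  refine ⟨#t, fun k ↦ yhat₀ (e k), fun y k ↦ w (e k) * M₀ y (e k), ht,
    fun y hy k ↦ mul_nonneg (hw _ (e k).2) (h₀nonneg y hy _),
    fun y hy ↦ ((sum_comp_equiv_coe t e _).trans (hsum y hy)).trans (h₀sum y hy),
    fun k y hy y' hy' ↦ ?_, fun y hy ↦ ?_, ?_⟩
  · calc w (e k) * M₀ y' (e k) ≤ w (e k) * (Real.exp ε * M₀ y (e k)) :=
          mul_le_mul_of_nonneg_left (h₀dp _ y hy y' hy') (hw _ (e k).2)
      _ = Real.exp ε * (w (e k) * M₀ y (e k)) := mul_left_comm _ _ _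
  · simp_rw [mul_assoc]
    exact ((sum_comp_equiv_coe t e _).trans (hmean y hy)).trans (h₀unbiased y hy)
  · calc ∑ y ∈ Y, P y * ∑ k, w (e k) * M₀ y (e k) * g (yhat₀ (e k)) y
        = ∑ i ∈ t, w i * c i := by
          simp only [← sum_comp_equiv_coe t e, c, mul_sum]
          rw [sum_comm]
          exact sum_congr rfl fun k _ ↦ sum_congr rfl fun y _ ↦ by ring
      _ ≤ ∑ i, c i := hcost
      _ = _ := by simp_rw [c, mul_sum]; exact sum_comm

/-- For `ε > 0`, a finite nonempty label set `Y ⊆ ℝ`, a loss `g` convex in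
its first argument, and a prior `P` on `Y`: for every `ε`-DP unbiased label randomizer
`M₀` with finitely many output labels, there is an `ε`-DP unbiased label randomizer `M`
with at most `2·|Y|` output labels whose noisy label loss w.r.t. `P` is no larger. -/
theorem stmt_1
    (ε : ℝ) (hε : 0 < ε)
    (Y : Finset ℝ) (hY : Y.Nonempty)
    (g : ℝ → ℝ → ℝ)
    (hg : ∀ y ∈ Y, ConvexOn ℝ Set.univ (fun s => g s y))
    (P : ℝ → ℝ) (hP0 : ∀ y ∈ Y, 0 ≤ P y) (hP1 : ∑ y ∈ Y, P y = 1)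
    (m₀ : ℕ) (yhat₀ : Fin m₀ → ℝ) (M₀ : ℝ → Fin m₀ → ℝ)
    (h₀nonneg : ∀ y ∈ Y, ∀ i, 0 ≤ M₀ y i)
    (h₀sum : ∀ y ∈ Y, ∑ i, M₀ y i = 1)
    (h₀dp : ∀ i, ∀ y ∈ Y, ∀ y' ∈ Y, M₀ y' i ≤ Real.exp ε * M₀ y i)
    (h₀unbiased : ∀ y ∈ Y, ∑ i, M₀ y i * yhat₀ i = y) :
    ∃ (m : ℕ) (yhat : Fin m → ℝ) (M : ℝ → Fin m → ℝ),
      m ≤ 2 * Y.card ∧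
      (∀ y ∈ Y, ∀ i, 0 ≤ M y i) ∧
      (∀ y ∈ Y, ∑ i, M y i = 1) ∧
      (∀ i, ∀ y ∈ Y, ∀ y' ∈ Y, M y' i ≤ Real.exp ε * M y i) ∧
      (∀ y ∈ Y, ∑ i, M y i * yhat i = y) ∧
      (∑ y ∈ Y, P y * ∑ i, M y i * g (yhat i) y) ≤
        (∑ y ∈ Y, P y * ∑ i, M₀ y i * g (yhat₀ i) y) :=
  stmt_1_general ε Y hY g P m₀ yhat₀ M₀ h₀nonneg h₀sum h₀dp h₀unbiased
end

section
/- Let ε > 0, let Y ⊆ ℝ be a finite set of input labels with k = |Y| ≥ 2, let g : ℝ × ℝ → ℝ be a loss such that g(·, y) is convex for every y ∈ Y, and let P be a prior on Y. Then for every ε-DP label randomizer M⁰ on Y with finitely many output labels, there exists an ε-DP label randomizer M on Y with output labels ŷ_1, ..., ŷ_m such that: (1) G(M;P) ≤ G(M⁰;P); (2) the expected output is preserved: Σ_{j=1}^m M_{y→j}·ŷ_j equals the expected output of M⁰ on input y, for every y ∈ Y (in particular, if M⁰ is unbiased then M is unbiased); (3) m ≤ 2^k; (4) for each output index j, the column (M_{y→j})_{y∈Y}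 is a positive scalar multiple of a vector all of whose entries lie in {1, e^ε}, and these {1, e^ε}-valued vectors are pairwise distinct across the columns. -/
/-!
Every column of an `ε`-DP randomizer lies in a box `[a, e^ε a]^Y`, so it is a nonnegative
combination of the vertices `a • w_S` of that box, where `w_S` is `e^ε` on `S ⊆ Y` and `1` off `S`
(expand `∏ y, ((1 - t y) + t y)`). Split every column this way, then merge all pieces proportional
to the same `w_S` into one column whose output label is the weighted mean of their labels. This
leaves at most `2^k` columns, keeps row sums and expected outputs, and by Jensen's inequality does
not increase the loss.
-/

open Finset

variable {α ι : Type*}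

section TwoLevel

variable [DecidableEq α]

def twoLevel (E : ℝ) (S : Finset α) (y : α) : ℝ := if y ∈ S then E else 1

section Vertex

variable {E : ℝ} {S S' : Finset α}

lemma twoLevel_eq_one_or_eq (y : α) : twoLevel E S y = 1 ∨ twoLevel E S y = E := by
  unfold twoLevel; split_ifs <;> simp

lemma one_le_twoLevel (hE : 1 ≤ E) (y : α) : 1 ≤ twoLevel E S y := by
  unfold twoLevel; split_ifs <;> simp [hE]

lemma twoLevel_le (hE : 1 ≤ E) (y : α) : twoLevel E S y ≤ E := by
  unfold twoLevel; split_ifs <;> simp [hE]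

lemma twoLevel_le_mul_twoLevel (hE : 1 ≤ E) (y y' : α) :
    twoLevel E S y' ≤ E * twoLevel E S y := by
  calc twoLevel E S y' ≤ E * 1 := by rw [mul_one]; exact twoLevel_le hE y'
    _ ≤ E * twoLevel E S y := mul_le_mul_of_nonneg_left (one_le_twoLevel hE y) (by linarith)

lemma exists_twoLevel_ne {Y : Finset α} (hE : E ≠ 1) (hS : S ⊆ Y) (hS' : S' ⊆ Y) (hne : S ≠ S') :
    ∃ y ∈ Y, twoLevel E S y ≠ twoLevel E S' y := by
  obtain ⟨y, hy⟩ : ∃ y, ¬(y ∈ S ↔ y ∈ S') := by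
    by_contra! h
    exact hne (Finset.ext h)
  by_cases h : y ∈ S
  · have h' : y ∉ S' := fun h' => hy (iff_of_true h h')
    exact ⟨y, hS h, by simpa [twoLevel, h, h'] using hE⟩
  · have h' : y ∈ S' := by_contra fun h' => hy (iff_of_false h h')
    exact ⟨y, hS' h', by simpa [twoLevel, h, h'] using hE.symm⟩

end Vertex

lemma sum_powerset_prod_mul_twoLevel (Y : Finset α) (t : α → ℝ) (E : ℝ) {y : α} (hy : y ∈ Y) :
    ∑ S ∈ Y.powerset, (∏ x ∈ S, t x) * (∏ x ∈ Y \ S, (1 - t x)) * twoLevel E S y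
      = 1 - t y + t y * E := by
  have hS : ∀ S ∈ Y.powerset, (∏ x ∈ S, t x) * (∏ x ∈ Y \ S, (1 - t x)) * twoLevel E S y
      = (∏ x ∈ S, twoLevel E {y} x * t x) * ∏ x ∈ Y \ S, (1 - t x) := by
    intro S _
    rw [prod_mul_distrib]
    simp only [twoLevel, mem_singleton, prod_ite_eq']
    ring
  rw [sum_congr rfl hS, ← prod_add, prod_eq_single_of_mem y hy]
  · simp only [twoLevel, mem_singleton, ↓reduceIte]
    ring
  · intro x _ hx
    simp [twoLevel, hx]

theorem exists_twoLevel_decomposition {Y : Finset α} (hY : Y.Nonempty) {E : ℝ} (hE : 1 < E)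
    {v : α → ℝ} (hv : ∀ y ∈ Y, 0 ≤ v y) (hvE : ∀ y ∈ Y, ∀ y' ∈ Y, v y' ≤ E * v y) :
    ∃ lam : Finset α → ℝ, (∀ S ∈ Y.powerset, 0 ≤ lam S) ∧
      ∀ y ∈ Y, v y = ∑ S ∈ Y.powerset, lam S * twoLevel E S y := by
  obtain ⟨y₀, hy₀, hmin⟩ := Y.exists_min_image v hY
  have ha := hv y₀ hy₀
  have hup := hvE y₀ hy₀
  generalize v y₀ = a at ha hmin hup
  -- for `a = 0` the junk value `x / 0 = 0` gives `t = 0`, and then `v = 0` on `Y` anyway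
  obtain ⟨t, ht_def⟩ : ∃ t : α → ℝ, t = fun y => (v y - a) / ((E - 1) * a) := ⟨_, rfl⟩
  have ht : ∀ y ∈ Y, 0 ≤ t y ∧ t y ≤ 1 := fun y hy => by
    rw [ht_def]
    exact ⟨div_nonneg (by linarith [hmin y hy]) (by nlinarith),
      div_le_one_of_le₀ (by linarith [hup y hy]) (by nlinarith)⟩
  refine ⟨fun S => a * ((∏ x ∈ S, t x) * ∏ x ∈ Y \ S, (1 - t x)), fun S hS => ?_, fun y hy => ?_⟩
  · have hSY := mem_powerset.mp hS
    refine mul_nonneg ha (mul_nonneg (prod_nonneg fun x hx => (ht x (hSY hx)).1)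
      (prod_nonneg fun x hx => ?_))
    linarith [(ht x (mem_sdiff.mp hx).1).2]
  · rw [show ∑ S ∈ Y.powerset, a * ((∏ x ∈ S, t x) * ∏ x ∈ Y \ S, (1 - t x)) * twoLevel E S y
        = a * (1 - t y + t y * E) by
      rw [← sum_powerset_prod_mul_twoLevel Y t E hy, mul_sum]
      exact sum_congr rfl fun S _ => by ring]
    rcases ha.eq_or_lt with ha | ha
    · have := hup y hy
      rw [← ha, mul_zero] at this
      rw [← ha, zero_mul]
      linarith [hv y hy]
    · have : E - 1 ≠ 0 := by linarith
      rw [ht_def]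
      field_simp
      ring

end TwoLevel

section Merge

variable [Fintype ι]

lemma sum_mul_centerMass {w x : ι → ℝ} (hw : ∑ i, w i ≠ 0) :
    (∑ i, w i) * univ.centerMass w x = ∑ i, w i * x i := by
  simp [centerMass, hw]

lemma ConvexOn.sum_mul_map_centerMass_le {φ : ℝ → ℝ} (hφ : ConvexOn ℝ Set.univ φ) {w x : ι → ℝ}
    (hw : ∀ i, 0 ≤ w i) (hpos : 0 < ∑ i, w i) :
    (∑ i, w i) * φ (univ.centerMass w x) ≤ ∑ i, w i * φ (x i) := by
  rw [← sum_mul_centerMass hpos.ne']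
  exact mul_le_mul_of_nonneg_left
    (hφ.map_centerMass_le (fun i _ => hw i) hpos fun _ _ => trivial) hpos.le

variable {Y : Finset α} {lam : ι → Finset α → ℝ}

noncomputable def mergedSupport (Y : Finset α) (lam : ι → Finset α → ℝ) : Finset (Finset α) :=
  Y.powerset.filter fun S => 0 < ∑ i, lam i S

lemma sum_sum_powerset_mul_eq_sum_mergedSupport (hlam : ∀ i, ∀ S ∈ Y.powerset, 0 ≤ lam i S)
    (w : Finset α → ℝ) (x : ι → ℝ) :
    ∑ i, (∑ S ∈ Y.powerset, lam i S * w S) * x i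
      = ∑ S ∈ mergedSupport Y lam, w S * ∑ i, lam i S * x i := by
  have hswap : ∑ i, (∑ S ∈ Y.powerset, lam i S * w S) * x i
      = ∑ S ∈ Y.powerset, w S * ∑ i, lam i S * x i := by
    simp_rw [sum_mul, mul_sum]
    rw [sum_comm]
    exact sum_congr rfl fun _ _ => sum_congr rfl fun _ _ => by ring
  rw [hswap, mergedSupport, sum_filter_of_ne]
  intro S hS hne
  by_contra hle
  have hzero : ∀ i, lam i S = 0 := fun i =>
    (sum_eq_zero_iff_of_nonneg fun i _ => hlam i S hS).mp
      (le_antisymm (not_lt.mp hle) (sum_nonneg fun i _ => hlam i S hS)) i (mem_univ i)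
  simp [hzero] at hne

lemma sum_mergedSupport_mass_mul (hlam : ∀ i, ∀ S ∈ Y.powerset, 0 ≤ lam i S)
    (w : Finset α → ℝ) :
    ∑ S ∈ mergedSupport Y lam, (∑ i, lam i S) * w S = ∑ i, ∑ S ∈ Y.powerset, lam i S * w S := by
  simpa [mul_comm] using (sum_sum_powerset_mul_eq_sum_mergedSupport hlam w fun _ => 1).symm

lemma sum_mergedSupport_mass_mul_centerMass (hlam : ∀ i, ∀ S ∈ Y.powerset, 0 ≤ lam i S)
    (w : Finset α → ℝ) (x : ι → ℝ) :
    ∑ S ∈ mergedSupport Y lam, (∑ i, lam i S) * w S * univ.centerMass (lam · S) x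
      = ∑ i, (∑ S ∈ Y.powerset, lam i S * w S) * x i := by
  rw [sum_sum_powerset_mul_eq_sum_mergedSupport hlam]
  refine sum_congr rfl fun S hS => ?_
  rw [mul_right_comm, sum_mul_centerMass (mem_filter.mp hS).2.ne', mul_comm]

lemma sum_mergedSupport_mass_mul_map_centerMass_le (hlam : ∀ i, ∀ S ∈ Y.powerset, 0 ≤ lam i S)
    {w : Finset α → ℝ} (hw : ∀ S, 0 ≤ w S) {φ : ℝ → ℝ} (hφ : ConvexOn ℝ Set.univ φ) (x : ι → ℝ) :
    ∑ S ∈ mergedSupport Y lam, (∑ i, lam i S) * w S * φ (univ.centerMass (lam · S) x)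
      ≤ ∑ i, (∑ S ∈ Y.powerset, lam i S * w S) * φ (x i) := by
  rw [sum_sum_powerset_mul_eq_sum_mergedSupport hlam]
  refine sum_le_sum fun S hS => ?_
  obtain ⟨hSY, hpos⟩ := mem_filter.mp hS
  rw [mul_right_comm, mul_comm]
  exact mul_le_mul_of_nonneg_left
    (hφ.sum_mul_map_centerMass_le (fun i => hlam i S hSY) hpos) (hw S)

end Merge

theorem stmt_3_general
    (ε : ℝ) (hε : 0 < ε)
    (Y : Finset ℝ) (hYcard : 2 ≤ Y.card)
    (g : ℝ → ℝ → ℝ)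
    (hg : ∀ y ∈ Y, ConvexOn ℝ Set.univ (fun s => g s y))
    (P : ℝ → ℝ) (hP0 : ∀ y ∈ Y, 0 ≤ P y)
    (m₀ : ℕ) (yhat₀ : Fin m₀ → ℝ) (M₀ : ℝ → Fin m₀ → ℝ)
    (h₀nonneg : ∀ y ∈ Y, ∀ i, 0 ≤ M₀ y i)
    (h₀sum : ∀ y ∈ Y, ∑ i, M₀ y i = 1)
    (h₀dp : ∀ i, ∀ y ∈ Y, ∀ y' ∈ Y, M₀ y' i ≤ Real.exp ε * M₀ y i) :
    ∃ (m : ℕ) (yhat : Fin m → ℝ) (M : ℝ → Fin m → ℝ),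
      -- M is a label randomizer on Y
      (∀ y ∈ Y, ∀ j, 0 ≤ M y j) ∧
      (∀ y ∈ Y, ∑ j, M y j = 1) ∧
      -- M is ε-DP
      (∀ j, ∀ y ∈ Y, ∀ y' ∈ Y, M y' j ≤ Real.exp ε * M y j) ∧
      -- (1) the noisy label loss does not increase
      (∑ y ∈ Y, P y * ∑ j, M y j * g (yhat j) y) ≤
        (∑ y ∈ Y, P y * ∑ i, M₀ y i * g (yhat₀ i) y) ∧
      -- (2) the expected output of M equals the expected output of M₀ on every input
      (∀ y ∈ Y, ∑ j, M y j * yhat j = ∑ i, M₀ y i * yhat₀ i) ∧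
      -- (3) at most 2^k output labels
      m ≤ 2 ^ Y.card ∧
      -- (4) each column is a positive multiple of a {1, e^ε}-valued vector,
      -- with these vectors pairwise distinct across columns
      ∃ (c : Fin m → ℝ) (w : Fin m → ℝ → ℝ),
        (∀ j, 0 < c j) ∧
        (∀ j, ∀ y ∈ Y, w j y = 1 ∨ w j y = Real.exp ε) ∧
        (∀ j, ∀ y ∈ Y, M y j = c j * w j y) ∧
        (∀ j j' : Fin m, j ≠ j' → ∃ y ∈ Y, w j y ≠ w j' y) := by
  classical
  have hE : 1 < Real.exp ε := Real.one_lt_exp_iff.mpr hε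
  have hY : Y.Nonempty := card_pos.mp (by omega)
  choose lam hlam hM₀ using fun i => exists_twoLevel_decomposition hY hE
    (fun y hy => h₀nonneg y hy i) (fun y hy y' hy' => h₀dp i y hy y' hy')
  set T := mergedSupport Y lam
  set e := T.equivFin.symm
  have hreindex (F : Finset ℝ → ℝ) : ∑ j, F (e j) = ∑ S ∈ T, F S :=
    (e.sum_comp fun S => F S).trans (sum_coe_sort T F)
  have hpos (j) : 0 < ∑ i, lam i (e j) := (mem_filter.mp (e j).2).2
  have hsub (j) : (e j : Finset ℝ) ⊆ Y := mem_powerset.mp (mem_filter.mp (e j).2).1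
  have hM₀_eq (y) (hy : y ∈ Y) : M₀ y = fun i => ∑ S ∈ Y.powerset, lam i S * twoLevel (Real.exp ε) S y :=
    funext fun i => hM₀ i y hy
  refine ⟨T.card, fun j => univ.centerMass (lam · (e j)) yhat₀,
    fun y j => (∑ i, lam i (e j)) * twoLevel (Real.exp ε) (e j) y,
    fun y _ j => mul_nonneg (hpos j).le (zero_le_one.trans (one_le_twoLevel hE.le y)),
    fun y hy => ?_, fun j y _ y' _ => ?_, sum_le_sum fun y hy => ?_, fun y hy => ?_,
    (card_filter_le _ _).trans (card_powerset Y).le,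
    fun j => ∑ i, lam i (e j), fun j => twoLevel (Real.exp ε) (e j), hpos,
    fun j y _ => twoLevel_eq_one_or_eq y, fun _ _ _ => rfl,
    fun j j' hne => exists_twoLevel_ne hE.ne' (hsub j) (hsub j')
      fun h => hne (e.injective (Subtype.ext h))⟩
  · rw [hreindex fun S => (∑ i, lam i S) * twoLevel (Real.exp ε) S y,
      sum_mergedSupport_mass_mul hlam, ← h₀sum y hy, hM₀_eq y hy]
  · rw [mul_left_comm]
    exact mul_le_mul_of_nonneg_left (twoLevel_le_mul_twoLevel hE.le y y') (hpos j).le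
  · refine mul_le_mul_of_nonneg_left ?_ (hP0 y hy)
    rw [hreindex fun S => (∑ i, lam i S) * twoLevel (Real.exp ε) S y *
      g (univ.centerMass (lam · S) yhat₀) y, hM₀_eq y hy]
    exact sum_mergedSupport_mass_mul_map_centerMass_le hlam
      (fun S => zero_le_one.trans (one_le_twoLevel hE.le y)) (hg y hy) yhat₀
  · rw [hreindex fun S => (∑ i, lam i S) * twoLevel (Real.exp ε) S y *
      univ.centerMass (lam · S) yhat₀, hM₀_eq y hy]
    exact sum_mergedSupport_mass_mul_centerMass hlam _ yhat₀

/-- For `ε > 0`, a finite label set `Y ⊆ ℝ` with `k = |Y| ≥ 2`, a loss `g`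
convex in its first argument and a prior `P`: every `ε`-DP label randomizer `M₀` with
finitely many output labels can be replaced by an `ε`-DP label randomizer `M` with
`m ≤ 2^k` output labels, no larger noisy label loss, the same expected output on every
input label (so unbiasedness is preserved), and whose columns are positive scalar
multiples of pairwise distinct `{1, e^ε}`-valued vectors. -/
theorem stmt_3
    (ε : ℝ) (hε : 0 < ε)
    (Y : Finset ℝ) (hYcard : 2 ≤ Y.card)
    (g : ℝ → ℝ → ℝ)
    (hg : ∀ y ∈ Y, ConvexOn ℝ Set.univ (fun s => g s y))
    (P : ℝ → ℝ) (hP0 : ∀ y ∈ Y, 0 ≤ P y) (hP1 : ∑ y ∈ Y, P y = 1)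
    (m₀ : ℕ) (yhat₀ : Fin m₀ → ℝ) (M₀ : ℝ → Fin m₀ → ℝ)
    (h₀nonneg : ∀ y ∈ Y, ∀ i, 0 ≤ M₀ y i)
    (h₀sum : ∀ y ∈ Y, ∑ i, M₀ y i = 1)
    (h₀dp : ∀ i, ∀ y ∈ Y, ∀ y' ∈ Y, M₀ y' i ≤ Real.exp ε * M₀ y i) :
    ∃ (m : ℕ) (yhat : Fin m → ℝ) (M : ℝ → Fin m → ℝ),
      -- M is a label randomizer on Y
      (∀ y ∈ Y, ∀ j, 0 ≤ M y j) ∧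
      (∀ y ∈ Y, ∑ j, M y j = 1) ∧
      -- M is ε-DP
      (∀ j, ∀ y ∈ Y, ∀ y' ∈ Y, M y' j ≤ Real.exp ε * M y j) ∧
      -- (1) the noisy label loss does not increase
      (∑ y ∈ Y, P y * ∑ j, M y j * g (yhat j) y) ≤
        (∑ y ∈ Y, P y * ∑ i, M₀ y i * g (yhat₀ i) y) ∧
      -- (2) the expected output of M equals the expected output of M₀ on every input
      (∀ y ∈ Y, ∑ j, M y j * yhat j = ∑ i, M₀ y i * yhat₀ i) ∧
      -- (3) at most 2^k output labels
      m ≤ 2 ^ Y.card ∧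
      -- (4) each column is a positive multiple of a {1, e^ε}-valued vector,
      -- with these vectors pairwise distinct across columns
      ∃ (c : Fin m → ℝ) (w : Fin m → ℝ → ℝ),
        (∀ j, 0 < c j) ∧
        (∀ j, ∀ y ∈ Y, w j y = 1 ∨ w j y = Real.exp ε) ∧
        (∀ j, ∀ y ∈ Y, M y j = c j * w j y) ∧
        (∀ j j' : Fin m, j ≠ j' → ∃ y ∈ Y, w j y ≠ w j' y) :=
  stmt_3_general ε hε Y hYcard g hg P hP0 m₀ yhat₀ M₀ h₀nonneg h₀sum h₀dp
end

section
/- Let ε > 0, let Y ⊆ ℝ be a finite set of input labels, and let M be an unbiased label randomizer on Y with output labels ŷ_1 < ... < ŷ_m such that for every column i, the minimum entry q_i = min_{y∈Y} M_{y→i} is strictly positive, every entry satisfies M_{y→i} ∈ {q_i, e^ε·q_i}, and for each y ∈ Y the set T(y) := {i : M_{y→i} = e^ε·q_i} is a nonempty contiguous set of indices in {1, ..., m}. Then for all y ≠ y' in Y, T(y) is not a proper subset of T(y'); and moreover, if y < y' then min T(y) < min T(y') and max T(y) < max T(y'). -/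
/-!
Write `E = e^ε` and `T(y)` for the set of indices where row `y` takes the value `E·q i`, so that
`M y i = q i + (E - 1)·q i·[i ∈ T(y)]`. Normalization then says that the `q`-mass of `T(y)` is
`(1 - ∑ q)/(E - 1)`, the same for every row, and unbiasedness says that its `q`-weighted first
moment `∑_{i ∈ T(y)} q i·ŷ_i` is `(y - ∑ q i·ŷ_i)/(E - 1)`, strictly increasing in `y`.
Equal positive mass rules out proper inclusions. For intervals of equal mass, moving the right
endpoint to the left can only trade mass for mass further left, which cannot increase the moment;
hence `y < y'` forces `max T(y) < max T(y')`, and then `min T(y') ≤ min T(y)` would give a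
proper inclusion.
-/

open Finset

section TwoValued

variable {ι : Type*} [Fintype ι] {p p' q : ι → ℝ} {r : ℝ}

lemma sum_mul_eq_add_sum_filter_mul [DecidablePred fun i => p i = r * q i]
    (h : ∀ i, p i = q i ∨ p i = r * q i) (f : ι → ℝ) :
    ∑ i, p i * f i = ∑ i, q i * f i + (r - 1) * ∑ i with p i = r * q i, q i * f i := by
  rw [← sub_eq_iff_eq_add', ← sum_sub_distrib, mul_sum,
    ← sum_filter_of_ne (p := fun i => p i = r * q i)]
  · refine sum_congr rfl fun i hi => ?_
    rw [(mem_filter.mp hi).2]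
    ring
  · intro i _ hi
    exact (h i).resolve_left fun hpq => hi (by rw [hpq, sub_self])

variable [DecidablePred fun i => p i = r * q i] [DecidablePred fun i => p' i = r * q i]

lemma sum_filter_eq_of_sum_eq (hr : r ≠ 1) (h : ∀ i, p i = q i ∨ p i = r * q i)
    (h' : ∀ i, p' i = q i ∨ p' i = r * q i) (hsum : ∑ i, p i = ∑ i, p' i) :
    ∑ i with p i = r * q i, q i = ∑ i with p' i = r * q i, q i := by
  have hp := sum_mul_eq_add_sum_filter_mul h 1
  have hp' := sum_mul_eq_add_sum_filter_mul h' 1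
  simp only [Pi.one_apply, mul_one] at hp hp'
  exact mul_left_cancel₀ (sub_ne_zero.mpr hr) (by linarith)

lemma sum_filter_mul_lt_of_sum_mul_lt (hr : 1 < r) (h : ∀ i, p i = q i ∨ p i = r * q i)
    (h' : ∀ i, p' i = q i ∨ p' i = r * q i) {f : ι → ℝ}
    (hlt : ∑ i, p i * f i < ∑ i, p' i * f i) :
    ∑ i with p i = r * q i, q i * f i < ∑ i with p' i = r * q i, q i * f i := by
  rw [sum_mul_eq_add_sum_filter_mul h, sum_mul_eq_add_sum_filter_mul h'] at hlt
  exact lt_of_mul_lt_mul_left (by linarith) (sub_pos.mpr hr).le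

end TwoValued

lemma sum_lt_sum_of_ssubset_of_pos {ι : Type*} {s t : Finset ι} {q : ι → ℝ}
    (hq : ∀ i, 0 < q i) (h : s ⊂ t) : ∑ i ∈ s, q i < ∑ i ∈ t, q i := by
  obtain ⟨i, hit, his⟩ := exists_of_ssubset h
  exact sum_lt_sum_of_subset h.subset hit his (hq i) fun j _ _ => (hq j).le

lemma sum_mul_le_sum_mul_of_sum_eq {ι : Type*} [DecidableEq ι] {s t : Finset ι} {q w : ι → ℝ}
    (hq : ∀ i, 0 ≤ q i) (c : ℝ)
    (hleft : ∀ i ∈ t \ s, w i ≤ c) (hright : ∀ i ∈ s \ t, c ≤ w i)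
    (hmass : ∑ i ∈ t, q i = ∑ i ∈ s, q i) :
    ∑ i ∈ t, q i * w i ≤ ∑ i ∈ s, q i * w i := by
  have hdiff : ∑ i ∈ t \ s, q i = ∑ i ∈ s \ t, q i := by
    have h1 := sum_inter_add_sum_sdiff t s q
    have h2 := sum_inter_add_sum_sdiff s t q
    rw [inter_comm] at h1
    linarith
  calc ∑ i ∈ t, q i * w i
      = ∑ i ∈ s ∩ t, q i * w i + ∑ i ∈ t \ s, q i * w i := by
        rw [inter_comm, sum_inter_add_sum_sdiff]
    _ ≤ ∑ i ∈ s ∩ t, q i * w i + ∑ i ∈ t \ s, q i * c := by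
        gcongr with i hi
        exacts [hq i, hleft i hi]
    _ = ∑ i ∈ s ∩ t, q i * w i + ∑ i ∈ s \ t, q i * c := by
        rw [← sum_mul, ← sum_mul, hdiff]
    _ ≤ ∑ i ∈ s ∩ t, q i * w i + ∑ i ∈ s \ t, q i * w i := by
        gcongr with i hi
        exacts [hq i, hright i hi]
    _ = ∑ i ∈ s, q i * w i := sum_inter_add_sum_sdiff s t _

section Interval

variable {ι : Type*} [LinearOrder ι] [LocallyFiniteOrder ι] {q w : ι → ℝ}

lemma Finset.eq_Icc_min'_max' {s : Finset ι} (hs : s.Nonempty) (hc : (s : Set ι).OrdConnected) :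
    s = Icc (s.min' hs) (s.max' hs) := by
  ext i
  refine ⟨fun hi => mem_Icc.mpr ⟨min'_le s i hi, le_max' s i hi⟩, fun hi => ?_⟩
  exact_mod_cast hc.out (min'_mem s hs) (max'_mem s hs) (by simpa using hi)

lemma sum_Icc_mul_le_of_right_le (hq : ∀ i, 0 ≤ q i) (hw : Monotone w) {a b a' b' : ι}
    (hb : b' ≤ b) (hmass : ∑ i ∈ Icc a' b', q i = ∑ i ∈ Icc a b, q i) :
    ∑ i ∈ Icc a' b', q i * w i ≤ ∑ i ∈ Icc a b, q i * w i := by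
  refine sum_mul_le_sum_mul_of_sum_eq hq (w a) (fun i hi => hw ?_) (fun i hi => hw ?_) hmass
  · simp only [mem_sdiff, mem_Icc, not_and] at hi
    exact le_of_not_ge fun hai => hi.2 hai (hi.1.2.trans hb)
  · exact (mem_Icc.mp (mem_sdiff.mp hi).1).1

lemma lt_and_lt_of_sum_Icc_mul_lt (hq : ∀ i, 0 < q i) (hw : Monotone w) {a b a' b' : ι}
    (hab' : a' ≤ b') (hmass : ∑ i ∈ Icc a b, q i = ∑ i ∈ Icc a' b', q i)
    (hmoment : ∑ i ∈ Icc a b, q i * w i < ∑ i ∈ Icc a' b', q i * w i) : a < a' ∧ b < b' := by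
  have hb : b < b' := lt_of_not_ge fun hb =>
    (sum_Icc_mul_le_of_right_le (fun i => (hq i).le) hw hb hmass.symm).not_gt hmoment
  refine ⟨lt_of_not_ge fun ha => hmass.not_lt ?_, hb⟩
  exact sum_lt_sum_of_ssubset_of_pos hq (Icc_ssubset_Icc_right hab' ha hb)

lemma min'_lt_min'_and_max'_lt_max'_of_sum_mul_lt (hq : ∀ i, 0 < q i) (hw : Monotone w)
    {s t : Finset ι} (hs : s.Nonempty) (ht : t.Nonempty)
    (hsc : (s : Set ι).OrdConnected) (htc : (t : Set ι).OrdConnected)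
    (hmass : ∑ i ∈ s, q i = ∑ i ∈ t, q i) (hmoment : ∑ i ∈ s, q i * w i < ∑ i ∈ t, q i * w i) :
    s.min' hs < t.min' ht ∧ s.max' hs < t.max' ht := by
  rw [eq_Icc_min'_max' hs hsc, eq_Icc_min'_max' ht htc] at hmass hmoment
  exact lt_and_lt_of_sum_Icc_mul_lt hq hw (min'_le_max' t ht) hmass hmoment

end Interval

theorem stmt_5_general
    (ε : ℝ) (hε : 0 < ε)
    (Y : Finset ℝ)
    (m : ℕ) (yhat : Fin m → ℝ) (hyhat : StrictMono yhat)
    (M : ℝ → Fin m → ℝ) (q : Fin m → ℝ)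
    (hsum : ∀ y ∈ Y, ∑ i, M y i = 1)
    (hunbiased : ∀ y ∈ Y, ∑ i, M y i * yhat i = y)
    -- q i is the minimum entry of column i, and it is strictly positive
    (hqpos : ∀ i, 0 < q i)
    -- every entry lies in {q i, e^ε·q i}
    (hentries : ∀ i, ∀ y ∈ Y, M y i = q i ∨ M y i = Real.exp ε * q i)
    -- T(y) = {i : M y i = e^ε·q i} is nonempty and contiguous for every y ∈ Y
    (hTne : ∀ y ∈ Y, ∃ i, M y i = Real.exp ε * q i)
    (hTcontig : ∀ y ∈ Y, ∀ i i' i'' : Fin m, i ≤ i' → i' ≤ i'' →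
      M y i = Real.exp ε * q i → M y i'' = Real.exp ε * q i'' →
      M y i' = Real.exp ε * q i') :
    -- T(y) is never a proper subset of T(y') for distinct y, y' ∈ Y
    (∀ y ∈ Y, ∀ y' ∈ Y, y ≠ y' →
      ¬ ({i : Fin m | M y i = Real.exp ε * q i} ⊂
          {i : Fin m | M y' i = Real.exp ε * q i})) ∧
    -- if y < y' then min T(y) < min T(y') and max T(y) < max T(y')
    (∀ y ∈ Y, ∀ y' ∈ Y, y < y' →
      (∀ i i' : Fin m,
        (M y i = Real.exp ε * q i ∧
          ∀ j, M y j = Real.exp ε * q j → i ≤ j) →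
        (M y' i' = Real.exp ε * q i' ∧
          ∀ j, M y' j = Real.exp ε * q j → i' ≤ j) →
        i < i') ∧
      (∀ i i' : Fin m,
        (M y i = Real.exp ε * q i ∧
          ∀ j, M y j = Real.exp ε * q j → j ≤ i) →
        (M y' i' = Real.exp ε * q i' ∧
          ∀ j, M y' j = Real.exp ε * q j → j ≤ i') →
        i < i')) := by
  set E := Real.exp ε
  set T : ℝ → Finset (Fin m) := fun y => {i | M y i = E * q i} with hT
  have hcoe (y : ℝ) : (T y : Set (Fin m)) = {i | M y i = E * q i} := by simp [hT]
  have hE : 1 < E := Real.one_lt_exp_iff.mpr hε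
  have hmass : ∀ y ∈ Y, ∀ y' ∈ Y, ∑ i ∈ T y, q i = ∑ i ∈ T y', q i := fun y hy y' hy' =>
    sum_filter_eq_of_sum_eq hE.ne' (hentries · y hy) (hentries · y' hy')
      ((hsum y hy).trans (hsum y' hy').symm)
  have hne (y) (hy : y ∈ Y) : (T y).Nonempty := by
    obtain ⟨i, hi⟩ := hTne y hy
    exact ⟨i, by simpa [hT] using hi⟩
  have hconn (y) (hy : y ∈ Y) : (T y : Set (Fin m)).OrdConnected :=
    ⟨fun i hi i'' hi'' i' hi' => by
      rw [hcoe] at hi hi'' ⊢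
      exact hTcontig y hy i i' i'' hi'.1 hi'.2 hi hi''⟩
  refine ⟨fun y hy y' hy' _ hss => ?_, fun y hy y' hy' hlt => ?_⟩
  · rw [← hcoe, ← hcoe, coe_ssubset] at hss
    exact (hmass y hy y' hy').not_lt (sum_lt_sum_of_ssubset_of_pos hqpos hss)
  have hmoment : ∑ i ∈ T y, q i * yhat i < ∑ i ∈ T y', q i * yhat i :=
    sum_filter_mul_lt_of_sum_mul_lt hE (hentries · y hy) (hentries · y' hy')
      (by rwa [hunbiased y hy, hunbiased y' hy'])
  obtain ⟨hmin, hmax⟩ := min'_lt_min'_and_max'_lt_max'_of_sum_mul_lt hqpos hyhat.monotone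
    (hne y hy) (hne y' hy') (hconn y hy) (hconn y' hy') (hmass y hy y' hy') hmoment
  have hmin_eq (z) (hz : z ∈ Y) (j : Fin m) (hj : IsLeast {k | M z k = E * q k} j) :
      j = (T z).min' (hne z hz) := hj.unique (hcoe z ▸ isLeast_min' _ _)
  have hmax_eq (z) (hz : z ∈ Y) (j : Fin m) (hj : IsGreatest {k | M z k = E * q k} j) :
      j = (T z).max' (hne z hz) := hj.unique (hcoe z ▸ isGreatest_max' _ _)
  exact ⟨fun i i' hi hi' => by rwa [hmin_eq y hy i hi, hmin_eq y' hy' i' hi'],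
    fun i i' hi hi' => by rwa [hmax_eq y hy i hi, hmax_eq y' hy' i' hi']⟩

/-- For `ε > 0`, a finite label set `Y ⊆ ℝ`, and an unbiased label
randomizer `M` with strictly increasing output labels `yhat 1 < ... < yhat m`, whose
column minima `q i` are positive, whose entries all lie in `{q i, e^ε·q i}`, and for
which each row's set `T(y) = {i : M y i = e^ε·q i}` of `U`-entries is nonempty and
contiguous: for distinct `y ≠ y'` in `Y`, `T(y)` is not a proper subset of `T(y')`;
and if `y < y'` then `min T(y) < min T(y')` and `max T(y) < max T(y')`. -/
theorem stmt_5
    (ε : ℝ) (hε : 0 < ε)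
    (Y : Finset ℝ)
    (m : ℕ) (yhat : Fin m → ℝ) (hyhat : StrictMono yhat)
    (M : ℝ → Fin m → ℝ) (q : Fin m → ℝ)
    (hnonneg : ∀ y ∈ Y, ∀ i, 0 ≤ M y i)
    (hsum : ∀ y ∈ Y, ∑ i, M y i = 1)
    (hunbiased : ∀ y ∈ Y, ∑ i, M y i * yhat i = y)
    -- q i is the minimum entry of column i, and it is strictly positive
    (hqpos : ∀ i, 0 < q i)
    (hqmin : ∀ i, ∀ y ∈ Y, q i ≤ M y i)
    (hqatt : ∀ i, ∃ y ∈ Y, M y i = q i)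
    -- every entry lies in {q i, e^ε·q i}
    (hentries : ∀ i, ∀ y ∈ Y, M y i = q i ∨ M y i = Real.exp ε * q i)
    -- T(y) = {i : M y i = e^ε·q i} is nonempty and contiguous for every y ∈ Y
    (hTne : ∀ y ∈ Y, ∃ i, M y i = Real.exp ε * q i)
    (hTcontig : ∀ y ∈ Y, ∀ i i' i'' : Fin m, i ≤ i' → i' ≤ i'' →
      M y i = Real.exp ε * q i → M y i'' = Real.exp ε * q i'' →
      M y i' = Real.exp ε * q i') :
    -- T(y) is never a proper subset of T(y') for distinct y, y' ∈ Y
    (∀ y ∈ Y, ∀ y' ∈ Y, y ≠ y' →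
      ¬ ({i : Fin m | M y i = Real.exp ε * q i} ⊂
          {i : Fin m | M y' i = Real.exp ε * q i})) ∧
    -- if y < y' then min T(y) < min T(y') and max T(y) < max T(y')
    (∀ y ∈ Y, ∀ y' ∈ Y, y < y' →
      (∀ i i' : Fin m,
        (M y i = Real.exp ε * q i ∧
          ∀ j, M y j = Real.exp ε * q j → i ≤ j) →
        (M y' i' = Real.exp ε * q i' ∧
          ∀ j, M y' j = Real.exp ε * q j → i' ≤ j) →
        i < i') ∧
      (∀ i i' : Fin m,
        (M y i = Real.exp ε * q i ∧
          ∀ j, M y j = Real.exp ε * q j → j ≤ i) →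
        (M y' i' = Real.exp ε * q i' ∧
          ∀ j, M y' j = Real.exp ε * q j → j ≤ i') →
        i < i')) :=
  stmt_5_general ε hε Y m yhat hyhat M q hsum hunbiased hqpos hentries hTne hTcontig
end

section
/- Let ε > 0 and let Y ⊆ ℝ be a finite set of input labels with k = |Y| ≥ 2. Set y₀ = min Y, y₁ = max Y, and define ŷ₀ = ((e^ε + k − 1)·y₀ − Σ_{y∈Y} y)/(e^ε − 1) and ŷ₁ = ((e^ε + k − 1)·y₁ − Σ_{y∈Y} y)/(e^ε − 1). Then ŷ₀ < ŷ₁, and the matrix M with two output labels ŷ₀, ŷ₁ given by M_{y→0} = (ŷ₁ − y)/(ŷ₁ − ŷ₀) and M_{y→1} = (y − ŷ₀)/(ŷ₁ − ŷ₀) is a well-defined label randomizer on Y (all entries nonnegative, rows summing to 1) that is unbiased and ε-DP; in particular, there exists an ε-DP unbiased label randomizer on Y whose output labels are exactly the smallest and largest outputs of the ε-debiased randomized response, so the corresponding linear program is feasible. -/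
/-!
The debiased outputs `Φ` are increasing in `y` with `Φ(y₀) ≤ y₀` and `Φ(y₁) ≥ y₁`, so every label
is a convex combination of `ŷ₀ = Φ(y₀)` and `ŷ₁ = Φ(y₁)`; the two-point randomizer is the one
with these barycentric weights, which is automatically unbiased. Each column of weights is
monotone in `y`, so `ε`-DP reduces to comparing its values at `y₀` and `y₁`, e.g.
`ŷ₁ - y₀ ≤ e^ε (ŷ₁ - y₁)`; since `(e^ε - 1)(Φ(y₁) - y₁) = ∑_{y ∈ Y} (y₁ - y)`, this says the
single term `y₁ - y₀` is at most that sum.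
-/

open Finset

lemma sub_le_card_mul_sub_sum {Y : Finset ℝ} {m x : ℝ} (hm : ∀ y ∈ Y, y ≤ m) (hx : x ∈ Y) :
    m - x ≤ Y.card * m - ∑ y ∈ Y, y :=
  calc m - x ≤ ∑ y ∈ Y, (m - y) := single_le_sum (fun y hy => sub_nonneg.2 (hm y hy)) hx
    _ = Y.card * m - ∑ y ∈ Y, y := by rw [sum_sub_distrib, sum_const, nsmul_eq_mul]

lemma sub_le_sum_sub_card_mul {Y : Finset ℝ} {m x : ℝ} (hm : ∀ y ∈ Y, m ≤ y) (hx : x ∈ Y) :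
    x - m ≤ ∑ y ∈ Y, y - Y.card * m :=
  calc x - m ≤ ∑ y ∈ Y, (y - m) := single_le_sum (fun y hy => sub_nonneg.2 (hm y hy)) hx
    _ = ∑ y ∈ Y, y - Y.card * m := by rw [sum_sub_distrib, sum_const, nsmul_eq_mul]

/-- The output label `Φ(y)` of the `ε`-debiased randomized response, with `E = e^ε`. -/
noncomputable def debiasedRR (E : ℝ) (Y : Finset ℝ) (y : ℝ) : ℝ :=
  ((E + Y.card - 1) * y - ∑ y' ∈ Y, y') / (E - 1)

section DebiasedRR

variable {E : ℝ} {Y : Finset ℝ}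

lemma debiasedRR_strictMono (hE : 1 < E) : StrictMono (debiasedRR E Y) := by
  intro a b hab
  have hk : (0 : ℝ) ≤ Y.card := Nat.cast_nonneg _
  unfold debiasedRR
  gcongr
  linarith

lemma sub_one_mul_debiasedRR_sub_self (hE : 1 < E) (y : ℝ) :
    (E - 1) * (debiasedRR E Y y - y) = Y.card * y - ∑ y' ∈ Y, y' := by
  have : E - 1 ≠ 0 := by linarith
  unfold debiasedRR
  field_simp
  ring

lemma debiasedRR_le_self {y : ℝ} (hE : 1 < E) (hy : ∀ y' ∈ Y, y ≤ y') :
    debiasedRR E Y y ≤ y := by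
  have h := sub_one_mul_debiasedRR_sub_self (Y := Y) hE y
  have hsum : Y.card * y ≤ ∑ y' ∈ Y, y' := by
    simpa [nsmul_eq_mul] using card_nsmul_le_sum Y id y hy
  nlinarith

lemma self_le_debiasedRR {y : ℝ} (hE : 1 < E) (hy : ∀ y' ∈ Y, y' ≤ y) :
    y ≤ debiasedRR E Y y := by
  have h := sub_one_mul_debiasedRR_sub_self (Y := Y) hE y
  have hsum : ∑ y' ∈ Y, y' ≤ Y.card * y := by
    simpa [nsmul_eq_mul] using sum_le_card_nsmul Y id y hy
  nlinarith

lemma debiasedRR_sub_le_mul {m x : ℝ} (hE : 1 < E) (hm : ∀ y ∈ Y, y ≤ m) (hx : x ∈ Y) :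
    debiasedRR E Y m - x ≤ E * (debiasedRR E Y m - m) := by
  have h := sub_one_mul_debiasedRR_sub_self (Y := Y) hE m
  have := sub_le_card_mul_sub_sum hm hx
  linarith

lemma sub_debiasedRR_le_mul {m x : ℝ} (hE : 1 < E) (hm : ∀ y ∈ Y, m ≤ y) (hx : x ∈ Y) :
    x - debiasedRR E Y m ≤ E * (m - debiasedRR E Y m) := by
  have h := sub_one_mul_debiasedRR_sub_self (Y := Y) hE m
  have := sub_le_sum_sub_card_mul hm hx
  linarith

end DebiasedRR

section TwoPoint

variable {a b y : ℝ}

lemma two_point_weights_add (hab : a ≠ b) : (b - y) / (b - a) + (y - a) / (b - a) = 1 := by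
  have : b - a ≠ 0 := sub_ne_zero.2 hab.symm
  field_simp
  ring

lemma two_point_unbiased (hab : a ≠ b) :
    (b - y) / (b - a) * a + (y - a) / (b - a) * b = y := by
  have : b - a ≠ 0 := sub_ne_zero.2 hab.symm
  field_simp
  ring

lemma two_point_left_le_mul {c lo hi y' : ℝ} (hab : a ≤ b) (hc : 0 ≤ c) (hy' : lo ≤ y')
    (hy : y ≤ hi) (h : b - lo ≤ c * (b - hi)) :
    (b - y') / (b - a) ≤ c * ((b - y) / (b - a)) := by
  rw [← mul_div_assoc]
  refine div_le_div_of_nonneg_right ?_ (sub_nonneg.2 hab)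
  calc b - y' ≤ b - lo := by linarith
    _ ≤ c * (b - hi) := h
    _ ≤ c * (b - y) := by gcongr

lemma two_point_right_le_mul {c lo hi y' : ℝ} (hab : a ≤ b) (hc : 0 ≤ c) (hy' : y' ≤ hi)
    (hy : lo ≤ y) (h : hi - a ≤ c * (lo - a)) :
    (y' - a) / (b - a) ≤ c * ((y - a) / (b - a)) := by
  rw [← mul_div_assoc]
  refine div_le_div_of_nonneg_right ?_ (sub_nonneg.2 hab)
  calc y' - a ≤ hi - a := by linarith
    _ ≤ c * (lo - a) := h
    _ ≤ c * (y - a) := by gcongr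

end TwoPoint

/-- For `ε > 0` and a finite label set `Y ⊆ ℝ` with `k = |Y| ≥ 2`, with
`y₀ = min Y`, `y₁ = max Y`, and `yhat₀, yhat₁` the smallest and largest outputs of the
`ε`-debiased randomized response, one has `yhat₀ < yhat₁`, and the two-output matrix
`M y = ((yhat₁ − y)/(yhat₁ − yhat₀), (y − yhat₀)/(yhat₁ − yhat₀))` is a well-defined
label randomizer on `Y` (nonnegative entries, rows summing to 1) that is unbiased and
`ε`-DP.  In particular the LP of the paper is feasible with `Ŷ = {yhat₀, yhat₁}`. -/
theorem stmt_6
    (ε : ℝ) (hε : 0 < ε)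
    (Y : Finset ℝ) (hYcard : 2 ≤ Y.card)
    (y₀ y₁ S yhat₀ yhat₁ : ℝ)
    (hy₀ : y₀ = Y.min' (Finset.card_pos.mp (by omega)))
    (hy₁ : y₁ = Y.max' (Finset.card_pos.mp (by omega)))
    (hS : S = ∑ y ∈ Y, y)
    (hyhat₀ : yhat₀ = ((Real.exp ε + Y.card - 1) * y₀ - S) / (Real.exp ε - 1))
    (hyhat₁ : yhat₁ = ((Real.exp ε + Y.card - 1) * y₁ - S) / (Real.exp ε - 1)) :
    yhat₀ < yhat₁ ∧
    -- entries nonnegative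
    (∀ y ∈ Y, 0 ≤ (yhat₁ - y) / (yhat₁ - yhat₀)) ∧
    (∀ y ∈ Y, 0 ≤ (y - yhat₀) / (yhat₁ - yhat₀)) ∧
    -- rows sum to 1
    (∀ y ∈ Y, (yhat₁ - y) / (yhat₁ - yhat₀) + (y - yhat₀) / (yhat₁ - yhat₀) = 1) ∧
    -- unbiased
    (∀ y ∈ Y, ((yhat₁ - y) / (yhat₁ - yhat₀)) * yhat₀ +
        ((y - yhat₀) / (yhat₁ - yhat₀)) * yhat₁ = y) ∧
    -- ε-DP: each column's entries are within a factor e^ε of each other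
    (∀ y ∈ Y, ∀ y' ∈ Y,
      (yhat₁ - y') / (yhat₁ - yhat₀) ≤ Real.exp ε * ((yhat₁ - y) / (yhat₁ - yhat₀))) ∧
    (∀ y ∈ Y, ∀ y' ∈ Y,
      (y' - yhat₀) / (yhat₁ - yhat₀) ≤ Real.exp ε * ((y - yhat₀) / (yhat₁ - yhat₀))) := by
  have hE : 1 < Real.exp ε := Real.one_lt_exp_iff.2 hε
  have hmin : ∀ y ∈ Y, y₀ ≤ y := fun y hy => hy₀ ▸ Y.min'_le y hy
  have hmax : ∀ y ∈ Y, y ≤ y₁ := fun y hy => hy₁ ▸ Y.le_max' y hy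
  have hmem₀ : y₀ ∈ Y := hy₀ ▸ Y.min'_mem _
  have hmem₁ : y₁ ∈ Y := hy₁ ▸ Y.max'_mem _
  have hlt : y₀ < y₁ := hy₀ ▸ hy₁ ▸ Y.min'_lt_max'_of_card hYcard
  obtain rfl : yhat₀ = debiasedRR (Real.exp ε) Y y₀ := by rw [hyhat₀, hS]; rfl
  obtain rfl : yhat₁ = debiasedRR (Real.exp ε) Y y₁ := by rw [hyhat₁, hS]; rfl
  have hlt' := debiasedRR_strictMono (Y := Y) hE hlt
  have hlo : ∀ y ∈ Y, debiasedRR (Real.exp ε) Y y₀ ≤ y :=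
    fun y hy => (debiasedRR_le_self hE hmin).trans (hmin y hy)
  have hhi : ∀ y ∈ Y, y ≤ debiasedRR (Real.exp ε) Y y₁ :=
    fun y hy => (hmax y hy).trans (self_le_debiasedRR hE hmax)
  refine ⟨hlt', fun y hy => div_nonneg (sub_nonneg.2 (hhi y hy)) (by linarith),
    fun y hy => div_nonneg (sub_nonneg.2 (hlo y hy)) (by linarith),
    fun _ _ => two_point_weights_add hlt'.ne, fun _ _ => two_point_unbiased hlt'.ne, ?_, ?_⟩
  · exact fun y hy y' hy' => two_point_left_le_mul hlt'.le (Real.exp_pos ε).le (hmin y' hy')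
      (hmax y hy) (debiasedRR_sub_le_mul hE hmax hmem₀)
  · exact fun y hy y' hy' => two_point_right_le_mul hlt'.le (Real.exp_pos ε).le (hmax y' hy')
      (hmin y hy) (sub_debiasedRR_le_mul hE hmin hmem₁)
end

section
/- Let ε ≥ 0, let Y ⊆ ℝ be a finite set of input labels with prior P, let L < U be reals, let n ≥ 1 be an integer, Δ = (U − L)/n, and consider the grid Ŷ' = {L, L + Δ, L + 2Δ, ..., U}. Let g : ℝ × ℝ → ℝ be a loss such that for every y ∈ Y the function ŷ ↦ g(ŷ, y) is K-Lipschitz on [L, U]. Then for every ε-DP unbiased label randomizer M on Y whose (finitely many) output labels all lie in the interval [L, U], there exists an ε-DP unbiased label randomizer M' on Y whose output labels all lie in the grid Ŷ', such that G(M';P) ≤ G(M;P) + K·Δ. (Consequently, the optimal unbiased randomizer supported on the grid has noisy label loss at most K·Δ larger than that of the optimal unbiased randomizer with outputs in [L, U].) -/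
/-!
Each output label `ŷᵢ ∈ [L, U]` lies in a grid cell `[aᵢ, bᵢ]` of width `Δ`; replace it by `aᵢ`
with probability `1 - wᵢ` and by `bᵢ` with probability `wᵢ`, where `wᵢ = (ŷᵢ - aᵢ) / Δ`. The
conditional mean of the new output is `ŷᵢ`, so unbiasedness survives, and since the weights `wᵢ`
do not depend on the input label, the ε-DP ratio bounds survive too. Both new outputs are within
`Δ` of `ŷᵢ`, so by the Lipschitz bound the loss grows by at most `K·Δ` for every input label.
-/

open Finset

theorem exists_grid_cell {L Δ x : ℝ} {n : ℕ} (hΔ : 0 < Δ) (hn : 1 ≤ n)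
    (hx : x ∈ Set.Icc L (L + n * Δ)) :
    ∃ j < n, L + j * Δ ≤ x ∧ x ≤ L + (j + 1 : ℕ) * Δ := by
  have hq : 0 ≤ (x - L) / Δ := div_nonneg (by linarith [hx.1]) hΔ.le
  by_cases hfl : ⌊(x - L) / Δ⌋₊ < n
  · refine ⟨_, hfl, ?_, ?_⟩
    · have := (le_div_iff₀ hΔ).1 (Nat.floor_le hq)
      linarith
    · have := (div_lt_iff₀ hΔ).1 (Nat.lt_floor_add_one ((x - L) / Δ))
      push_cast
      linarith
  · refine ⟨n - 1, by omega, ?_, ?_⟩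
    · have hle : ((n - 1 : ℕ) : ℝ) ≤ (x - L) / Δ :=
        (Nat.cast_le.2 (by omega)).trans (Nat.floor_le hq)
      have := (le_div_iff₀ hΔ).1 hle
      linarith
    · rw [Nat.sub_add_cancel hn]
      exact hx.2

theorem grid_mem_Icc {L Δ : ℝ} {n j : ℕ} (hΔ : 0 ≤ Δ) (hj : j ≤ n) :
    L + j * Δ ∈ Set.Icc L (L + n * Δ) :=
  ⟨by nlinarith [(Nat.cast_nonneg j : (0 : ℝ) ≤ j)],
    by nlinarith [(Nat.cast_le.2 hj : (j : ℝ) ≤ n)]⟩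

theorem nonneg_of_lipschitz {S : Set ℝ} {f : ℝ → ℝ} {K s s' : ℝ}
    (hf : ∀ x ∈ S, ∀ x' ∈ S, |f x - f x'| ≤ K * |x - x'|) (hs : s ∈ S) (hs' : s' ∈ S)
    (hne : s ≠ s') : 0 ≤ K :=
  nonneg_of_mul_nonneg_left ((abs_nonneg _).trans (hf s hs s' hs'))
    (abs_pos.2 (sub_ne_zero.2 hne))

theorem interpolation_le_add_of_lipschitz {S : Set ℝ} {f : ℝ → ℝ} {K a b x w : ℝ}
    (hf : ∀ s ∈ S, ∀ s' ∈ S, |f s - f s'| ≤ K * |s - s'|) (hK : 0 ≤ K)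
    (ha : a ∈ S) (hb : b ∈ S) (hx : x ∈ S) (hax : a ≤ x) (hxb : x ≤ b) (hw : w ∈ unitInterval) :
    (1 - w) * f a + w * f b ≤ f x + K * (b - a) := by
  have near : ∀ s ∈ S, |s - x| ≤ b - a → f s ≤ f x + K * (b - a) := fun s hs hsx => by
    have := (le_abs_self _).trans ((hf s hs x hx).trans (mul_le_mul_of_nonneg_left hsx hK))
    linarith
  have hfa := near a ha (by rw [abs_sub_comm, abs_of_nonneg (by linarith)]; linarith)
  have hfb := near b hb (by rw [abs_of_nonneg (by linarith)]; linarith)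
  nlinarith [hw.1, hw.2]

theorem sub_div_sub_mem_unitInterval {a b x : ℝ} (hax : a ≤ x) (hxb : x ≤ b) :
    (x - a) / (b - a) ∈ unitInterval :=
  unitInterval.div_mem (by linarith) (by linarith) (by linarith)

theorem one_sub_sub_div_sub_mul_add {a b x : ℝ} (hab : a ≠ b) :
    (1 - (x - a) / (b - a)) * a + (x - a) / (b - a) * b = x := by
  field_simp [sub_ne_zero.2 hab.symm]
  ring

theorem sum_mul_le_sum_mul_add_of_sum_eq_one {ι : Type*} {s : Finset ι} {p f f' : ι → ℝ} {c : ℝ}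
    (hp0 : ∀ i ∈ s, 0 ≤ p i) (hp1 : ∑ i ∈ s, p i = 1) (h : ∀ i ∈ s, f' i ≤ f i + c) :
    ∑ i ∈ s, p i * f' i ≤ ∑ i ∈ s, p i * f i + c :=
  calc ∑ i ∈ s, p i * f' i ≤ ∑ i ∈ s, p i * (f i + c) :=
        sum_le_sum fun i hi => mul_le_mul_of_nonneg_left (h i hi) (hp0 i hi)
    _ = ∑ i ∈ s, p i * f i + c := by
      simp only [mul_add, sum_add_distrib, ← sum_mul, hp1, one_mul]

section SplitRandomizer

variable {m : ℕ} (M : ℝ → Fin m → ℝ) (w : Fin m → ℝ)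

/-- Outputs `i` and `m + i` share the mass of output `i` of `M` in proportions `1 - w i : w i`. -/
def splitRandomizer (y : ℝ) : Fin (m + m) → ℝ :=
  Fin.append (fun i => M y i * (1 - w i)) (fun i => M y i * w i)

theorem sum_splitRandomizer_mul (a b : Fin m → ℝ) (φ : ℝ → ℝ) (y : ℝ) :
    ∑ k, splitRandomizer M w y k * φ (Fin.append a b k) =
      ∑ i, M y i * ((1 - w i) * φ (a i) + w i * φ (b i)) := by
  simp only [splitRandomizer, Fin.sum_univ_add, Fin.append_left, Fin.append_right,
    ← sum_add_distrib]
  exact sum_congr rfl fun i _ => by ring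

theorem sum_splitRandomizer (y : ℝ) : ∑ k, splitRandomizer M w y k = ∑ i, M y i := by
  simpa using sum_splitRandomizer_mul M w 0 0 (fun _ => 1) y

variable {M w} {Y : Finset ℝ}

theorem splitRandomizer_nonneg (hM : ∀ y ∈ Y, ∀ i, 0 ≤ M y i) (hw : ∀ i, w i ∈ unitInterval) :
    ∀ y ∈ Y, ∀ k, 0 ≤ splitRandomizer M w y k := by
  intro y hy k
  refine Fin.addCases (fun i => ?_) (fun i => ?_) k <;>
    simp only [splitRandomizer, Fin.append_left, Fin.append_right]
  exacts [mul_nonneg (hM y hy i) (sub_nonneg.2 (hw i).2), mul_nonneg (hM y hy i) (hw i).1]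

theorem splitRandomizer_le_mul {c : ℝ} (hM : ∀ i, ∀ y ∈ Y, ∀ y' ∈ Y, M y' i ≤ c * M y i)
    (hw : ∀ i, w i ∈ unitInterval) :
    ∀ k, ∀ y ∈ Y, ∀ y' ∈ Y, splitRandomizer M w y' k ≤ c * splitRandomizer M w y k := by
  intro k y hy y' hy'
  refine Fin.addCases (fun i => ?_) (fun i => ?_) k <;>
    simp only [splitRandomizer, Fin.append_left, Fin.append_right, ← mul_assoc]
  exacts [mul_le_mul_of_nonneg_right (hM i y hy y' hy') (sub_nonneg.2 (hw i).2),
    mul_le_mul_of_nonneg_right (hM i y hy y' hy') (hw i).1]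

end SplitRandomizer

theorem stmt_7_general
    (ε : ℝ)
    (Y : Finset ℝ) (hY : Y.Nonempty)
    (P : ℝ → ℝ) (hP0 : ∀ y ∈ Y, 0 ≤ P y) (hP1 : ∑ y ∈ Y, P y = 1)
    (L U : ℝ) (hLU : L < U)
    (n : ℕ) (hn : 1 ≤ n)
    (Δ : ℝ) (hΔ : Δ = (U - L) / n)
    (K : ℝ) (g : ℝ → ℝ → ℝ)
    (hLip : ∀ y ∈ Y, ∀ s ∈ Set.Icc L U, ∀ s' ∈ Set.Icc L U,
      |g s y - g s' y| ≤ K * |s - s'|)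
    (m : ℕ) (yhat : Fin m → ℝ) (M : ℝ → Fin m → ℝ)
    (hnonneg : ∀ y ∈ Y, ∀ i, 0 ≤ M y i)
    (hsum : ∀ y ∈ Y, ∑ i, M y i = 1)
    (hdp : ∀ i, ∀ y ∈ Y, ∀ y' ∈ Y, M y' i ≤ Real.exp ε * M y i)
    (hunbiased : ∀ y ∈ Y, ∑ i, M y i * yhat i = y)
    (hrange : ∀ i, yhat i ∈ Set.Icc L U) :
    ∃ (m' : ℕ) (yhat' : Fin m' → ℝ) (M' : ℝ → Fin m' → ℝ),
      -- M' is a label randomizer on Y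
      (∀ y ∈ Y, ∀ i, 0 ≤ M' y i) ∧
      (∀ y ∈ Y, ∑ i, M' y i = 1) ∧
      -- M' is ε-DP
      (∀ i, ∀ y ∈ Y, ∀ y' ∈ Y, M' y' i ≤ Real.exp ε * M' y i) ∧
      -- M' is unbiased
      (∀ y ∈ Y, ∑ i, M' y i * yhat' i = y) ∧
      -- the output labels of M' lie on the grid {L, L+Δ, ..., U}
      (∀ i, ∃ j : ℕ, j ≤ n ∧ yhat' i = L + j * Δ) ∧
      -- the noisy label loss increases by at most K·Δ
      (∑ y ∈ Y, P y * ∑ i, M' y i * g (yhat' i) y) ≤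
        (∑ y ∈ Y, P y * ∑ i, M y i * g (yhat i) y) + K * Δ := by
  have hΔ0 : 0 < Δ := hΔ ▸ div_pos (sub_pos.2 hLU) (by exact_mod_cast hn)
  have hU : U = L + n * Δ := by rw [hΔ, mul_div_cancel₀ _ (by positivity)]; ring
  subst hU
  obtain ⟨y₀, hy₀⟩ := hY
  have hK : 0 ≤ K := nonneg_of_lipschitz (hLip y₀ hy₀) (grid_mem_Icc hΔ0.le (Nat.zero_le n))
    (grid_mem_Icc hΔ0.le le_rfl) (by simpa using hLU.ne)
  choose j hjn hja hjb using fun i => exists_grid_cell hΔ0 hn (hrange i)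
  set a : Fin m → ℝ := fun i => L + j i * Δ
  set b : Fin m → ℝ := fun i => L + (j i + 1 : ℕ) * Δ
  have hab : ∀ i, b i - a i = Δ := fun i => by simp only [a, b]; push_cast; ring
  set w : Fin m → ℝ := fun i => (yhat i - a i) / (b i - a i)
  have hw : ∀ i, w i ∈ unitInterval := fun i => sub_div_sub_mem_unitInterval (hja i) (hjb i)
  have hinterp : ∀ i, (1 - w i) * a i + w i * b i = yhat i := fun i =>
    one_sub_sub_div_sub_mul_add (by linarith [hab i])
  refine ⟨m + m, Fin.append a b, splitRandomizer M w, splitRandomizer_nonneg hnonneg hw,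
    fun y hy => (sum_splitRandomizer M w y).trans (hsum y hy), splitRandomizer_le_mul hdp hw,
    fun y hy => ?unbiased, fun k => ?grid, ?loss⟩
  case unbiased =>
    exact (sum_splitRandomizer_mul M w a b id y).trans (by simpa [hinterp] using hunbiased y hy)
  case grid =>
    refine Fin.addCases (fun i => ?_) (fun i => ?_) k <;>
      simp only [Fin.append_left, Fin.append_right]
    exacts [⟨j i, (hjn i).le, rfl⟩, ⟨j i + 1, hjn i, rfl⟩]
  case loss =>
    refine sum_mul_le_sum_mul_add_of_sum_eq_one hP0 hP1 fun y hy => ?_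
    rw [sum_splitRandomizer_mul M w a b (g · y)]
    refine sum_mul_le_sum_mul_add_of_sum_eq_one (fun i _ => hnonneg y hy i) (hsum y hy)
      fun i _ => ?_
    rw [← hab i]
    exact interpolation_le_add_of_lipschitz (hLip y hy) hK
      (grid_mem_Icc hΔ0.le (hjn i).le) (grid_mem_Icc hΔ0.le (hjn i)) (hrange i)
      (hja i) (hjb i) (hw i)

/-- For `ε ≥ 0`, a finite label set `Y ⊆ ℝ` with prior `P`, reals `L < U`,
an integer `n ≥ 1`, `Δ = (U − L)/n`, the grid `{L, L+Δ, ..., U}`, and a loss `g` that is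
`K`-Lipschitz in its first argument on `[L, U]`: every `ε`-DP unbiased label randomizer
`M` with output labels in `[L, U]` can be replaced by an `ε`-DP unbiased label
randomizer `M'` with output labels on the grid, whose noisy label loss exceeds that of
`M` by at most `K·Δ`. -/
theorem stmt_7
    (ε : ℝ) (hε : 0 ≤ ε)
    (Y : Finset ℝ) (hY : Y.Nonempty)
    (P : ℝ → ℝ) (hP0 : ∀ y ∈ Y, 0 ≤ P y) (hP1 : ∑ y ∈ Y, P y = 1)
    (L U : ℝ) (hLU : L < U)
    (n : ℕ) (hn : 1 ≤ n)
    (Δ : ℝ) (hΔ : Δ = (U - L) / n)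
    (K : ℝ) (g : ℝ → ℝ → ℝ)
    (hLip : ∀ y ∈ Y, ∀ s ∈ Set.Icc L U, ∀ s' ∈ Set.Icc L U,
      |g s y - g s' y| ≤ K * |s - s'|)
    (m : ℕ) (yhat : Fin m → ℝ) (M : ℝ → Fin m → ℝ)
    (hnonneg : ∀ y ∈ Y, ∀ i, 0 ≤ M y i)
    (hsum : ∀ y ∈ Y, ∑ i, M y i = 1)
    (hdp : ∀ i, ∀ y ∈ Y, ∀ y' ∈ Y, M y' i ≤ Real.exp ε * M y i)
    (hunbiased : ∀ y ∈ Y, ∑ i, M y i * yhat i = y)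
    (hrange : ∀ i, yhat i ∈ Set.Icc L U) :
    ∃ (m' : ℕ) (yhat' : Fin m' → ℝ) (M' : ℝ → Fin m' → ℝ),
      -- M' is a label randomizer on Y
      (∀ y ∈ Y, ∀ i, 0 ≤ M' y i) ∧
      (∀ y ∈ Y, ∑ i, M' y i = 1) ∧
      -- M' is ε-DP
      (∀ i, ∀ y ∈ Y, ∀ y' ∈ Y, M' y' i ≤ Real.exp ε * M' y i) ∧
      -- M' is unbiased
      (∀ y ∈ Y, ∑ i, M' y i * yhat' i = y) ∧
      -- the output labels of M' lie on the grid {L, L+Δ, ..., U}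
      (∀ i, ∃ j : ℕ, j ≤ n ∧ yhat' i = L + j * Δ) ∧
      -- the noisy label loss increases by at most K·Δ
      (∑ y ∈ Y, P y * ∑ i, M' y i * g (yhat' i) y) ≤
        (∑ y ∈ Y, P y * ∑ i, M y i * g (yhat i) y) + K * Δ :=
  stmt_7_general ε Y hY P hP0 hP1 L U hLU n hn Δ hΔ K g hLip m yhat M hnonneg hsum hdp hunbiased
    hrange
end

section
/- Let ε > 0 and let k ≥ 2 be an integer. Let v ∈ ℝ^k be a vector with v_i ≥ 0 for all i and v_i ≤ e^ε·v_j for all indices i, j (i.e., v satisfies the ε-DP column constraints). Then v is a nonnegative combination of staircase columns: there exist nonnegative coefficients (c_S), indexed by the subsets S of {1, ..., k} with ∅ ⊊ S ⊊ {1, ..., k}, such that v = Σ_S c_S·w_S, where w_S ∈ ℝ^k is the vector with (w_S)_i = e^ε for i ∈ S and (w_S)_i = 1 for i ∉ S. -/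
/-!
Let `m = min v` and `g = (v - m) / (e^ε - 1)`, so that `v = m + (e^ε - 1) g` and, by the
DP constraint, `0 ≤ g ≤ m` with `g` vanishing somewhere. The layer-cake decomposition
`g = ∑ c_S 1_S` over superlevel sets of `g` uses only proper nonempty sets and has total
weight `max g ≤ m`; since `w_S = 1 + (e^ε - 1) 1_S`, the combination `∑ c_S w_S` equals
`max g + (e^ε - 1) g`. The missing constant `m - max g` is `(m - max g)/(e^ε + 1)` times
`w_{i₀} + w_{i₀ᶜ}`, which is the constant vector `e^ε + 1`.
-/

open Finset

section LayerCake

variable {ι K : Type*} [Fintype ι] [DecidableEq ι]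
  [AddCommGroup K] [LinearOrder K]

/-- The total weight `∑ c S` is a value of `g`, hence its maximum: the decomposition is
tight. -/
def IsLayerDecomposition (g : ι → K) (c : Finset ι → K) : Prop :=
  (∀ S, 0 ≤ c S) ∧ (∀ S, c S ≠ 0 → S.Nonempty ∧ ∀ i ∈ S, 0 < g i) ∧
    (∃ j, ∑ S, c S = g j) ∧ ∀ i, g i = ∑ S with i ∈ S, c S

theorem isLayerDecomposition_zero [Nonempty ι] : IsLayerDecomposition (0 : ι → K) 0 :=
  ⟨fun _ => le_rfl, fun _ h => absurd rfl h, ⟨Classical.arbitrary ι, by simp⟩, by simp⟩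

theorem IsLayerDecomposition.add_layer [IsOrderedAddMonoid K] {g g' : ι → K} {c : Finset ι → K}
    (hc : IsLayerDecomposition g' c) (hg'0 : ∀ i, 0 ≤ g' i) {S : Finset ι} {t : K} (ht : 0 < t)
    (hg : ∀ i, g i = g' i + if i ∈ S then t else 0) {i₀ : ι} (hi₀ : i₀ ∈ S) (hg'i₀ : g' i₀ = 0)
    (hg'S : ∀ i ∉ S, g' i = 0) :
    IsLayerDecomposition g (c + Pi.single S t) := by
  obtain ⟨hc0, hc_supp, ⟨j, hcj⟩, hcg'⟩ := hc
  have hg'_le : ∀ i, g' i ≤ g i := fun i => by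
    rw [hg]; split_ifs <;> simp [ht.le]
  refine ⟨fun T => add_nonneg (hc0 T) ?_, fun T hT => ?_, ?_, fun i => ?_⟩
  · by_cases hTS : T = S <;> simp [hTS, ht.le]
  · by_cases hTS : T = S
    · subst hTS
      refine ⟨⟨i₀, hi₀⟩, fun i hi => ?_⟩
      simpa [hg, hi] using add_pos_of_nonneg_of_pos (hg'0 i) ht
    · obtain ⟨hT_ne, hT_pos⟩ := hc_supp T (by simpa [Pi.single_apply, hTS] using hT)
      exact ⟨hT_ne, fun i hi => (hT_pos i hi).trans_le (hg'_le i)⟩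
  · by_cases hjS : j ∈ S
    · exact ⟨j, by simp [sum_add_distrib, hcj, hg, hjS]⟩
    · exact ⟨i₀, by simp [sum_add_distrib, hcj, hg, hg'S j hjS, hi₀, hg'i₀]⟩
  · simp [hg, hcg' i, sum_add_distrib, Pi.single_apply, sum_ite_eq']

theorem exists_isLayerDecomposition [IsOrderedAddMonoid K] [Nonempty ι] (g : ι → K)
    (hg : ∀ i, 0 ≤ g i) :
    ∃ c : Finset ι → K, IsLayerDecomposition g c := by
  suffices ∀ s : Finset ι, ∀ g : ι → K, (∀ i, 0 ≤ g i) → ({i | 0 < g i} : Finset ι) ⊆ s →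
      ∃ c, IsLayerDecomposition g c from
    this univ g hg (subset_univ _)
  intro s
  induction s using Finset.strongInduction with
  | H s ih =>
  intro g hg hgs
  set S : Finset ι := {i | 0 < g i}
  have hS : ∀ i, i ∈ S ↔ 0 < g i := by simp [S]
  have hg_out : ∀ i ∉ S, g i = 0 := fun i hi =>
    le_antisymm (not_lt.mp fun h => hi ((hS i).mpr h)) (hg i)
  rcases S.eq_empty_or_nonempty with hS_empty | hS_ne
  · have hg_zero : g = 0 := funext fun i => hg_out i (by simp [hS_empty])
    exact ⟨0, hg_zero ▸ isLayerDecomposition_zero⟩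
  -- peel off the bottom layer `(g i₀) • 1_S`; the minimiser `i₀` leaves the support
  obtain ⟨i₀, hi₀S, hi₀⟩ := S.exists_min_image g hS_ne
  set g' : ι → K := fun i => g i - if i ∈ S then g i₀ else 0
  have hg'0 : ∀ i, 0 ≤ g' i := fun i => by
    by_cases hi : i ∈ S
    · simpa [g', hi] using hi₀ i hi
    · simpa [g', hi] using hg i
  have hg'_supp : ({i | 0 < g' i} : Finset ι) ⊆ S.erase i₀ := fun i hi => by
    have hi : 0 < g' i := by simpa using hi
    by_cases hiS : i ∈ S
    · exact mem_erase.mpr ⟨fun h => by simp [g', h, hi₀S] at hi, hiS⟩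
    · simp [g', hiS, hg_out i hiS] at hi
  obtain ⟨c, hc⟩ := ih _ ((erase_ssubset hi₀S).trans_le hgs) g' hg'0 hg'_supp
  exact ⟨_, hc.add_layer hg'0 ((hS i₀).mp hi₀S) (fun i => by simp [g']) hi₀S
    (by simp [g', hi₀S]) fun i hi => by simp [g', hi, hg_out i hi]⟩

end LayerCake

section Staircase

variable {ι : Type*} [Fintype ι] [DecidableEq ι]

def IsStaircaseCombination (a : ℝ) (v : ι → ℝ) : Prop :=
  ∃ c : Finset ι → ℝ, (∀ S, 0 ≤ c S) ∧
    ∀ i, v i = ∑ S ∈ univ.filter (fun S : Finset ι => S.Nonempty ∧ S ≠ univ),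
      c S * (if i ∈ S then a else 1)

theorem IsStaircaseCombination.add {a : ℝ} {v w : ι → ℝ} (hv : IsStaircaseCombination a v)
    (hw : IsStaircaseCombination a w) : IsStaircaseCombination a (v + w) := by
  obtain ⟨c, hc0, hc⟩ := hv
  obtain ⟨d, hd0, hd⟩ := hw
  refine ⟨c + d, fun S => add_nonneg (hc0 S) (hd0 S), fun i => ?_⟩
  simp only [Pi.add_apply, add_mul, sum_add_distrib, hc i, hd i]

theorem isStaircaseCombination_of_support {a : ℝ} (c : Finset ι → ℝ) (hc0 : ∀ S, 0 ≤ c S)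
    (hc : ∀ S, c S ≠ 0 → S.Nonempty ∧ S ≠ univ) :
    IsStaircaseCombination a (fun i => ∑ S, c S + (a - 1) * ∑ S with i ∈ S, c S) := by
  refine ⟨c, hc0, fun i => ?_⟩
  dsimp only
  rw [sum_filter_of_ne fun S _ hS => hc S (left_ne_zero_of_mul hS), sum_filter, mul_sum,
    ← sum_add_distrib]
  exact sum_congr rfl fun S _ => by split_ifs <;> ring

theorem isStaircaseCombination_const [Nontrivial ι] {a r : ℝ} (ha : 0 ≤ a) (hr : 0 ≤ r) :
    IsStaircaseCombination a (fun _ : ι => r) := by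
  obtain ⟨i₀, i₁, hi⟩ := exists_pair_ne ι
  set x := r / (a + 1)
  have hproper : ∀ S : Finset ι, S = {i₀} ∨ S = {i₀}ᶜ → S.Nonempty ∧ S ≠ univ := by
    rintro S (rfl | rfl)
    · exact ⟨singleton_nonempty _, fun h => hi.symm (mem_singleton.mp (h ▸ mem_univ i₁))⟩
    · refine ⟨⟨i₁, by simpa using hi.symm⟩, fun h => ?_⟩
      simpa using (h ▸ mem_univ i₀ : i₀ ∈ ({i₀}ᶜ : Finset ι))
  convert isStaircaseCombination_of_support (a := a) (Pi.single {i₀} x + Pi.single {i₀}ᶜ x)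
    (fun S => by simp only [Pi.add_apply, Pi.single_apply]; positivity)
    (fun S hS => hproper S ?_) using 1
  · funext i
    have hx : (a + 1) * x = r := mul_div_cancel₀ r (by positivity)
    by_cases h : i = i₀ <;> simp [sum_add_distrib, Pi.single_apply, sum_ite_eq', h] <;> linarith
  · by_contra h
    simp_all [not_or, Pi.single_apply]

theorem isStaircaseCombination_of_le_mul [Nontrivial ι] {a : ℝ} (ha : 1 < a) {v : ι → ℝ}
    (hv : ∀ i j, v i ≤ a * v j) : IsStaircaseCombination a v := by
  obtain ⟨i₀, hi₀⟩ := Finite.exists_min v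
  set g : ι → ℝ := fun i => (v i - v i₀) / (a - 1)
  have ha1 : 0 < a - 1 := sub_pos.mpr ha
  have hg0 : ∀ i, 0 ≤ g i := fun i => div_nonneg (sub_nonneg.mpr (hi₀ i)) ha1.le
  have hg_le : ∀ i, g i ≤ v i₀ := fun i => by
    rw [div_le_iff₀ ha1]; linarith [hv i i₀]
  obtain ⟨c, hc0, hc_supp, ⟨j, hcj⟩, hcg⟩ := exists_isLayerDecomposition g hg0
  have hc_proper : ∀ S, c S ≠ 0 → S.Nonempty ∧ S ≠ univ := fun S hS =>
    ⟨(hc_supp S hS).1, fun h => ((hc_supp S hS).2 i₀ (h ▸ mem_univ _)).ne' (by simp [g])⟩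
  convert (isStaircaseCombination_of_support (a := a) c hc0 hc_proper).add
    (isStaircaseCombination_const (by linarith) (sub_nonneg.mpr (hg_le j))) using 1
  funext i
  simp only [Pi.add_apply, hcj, ← hcg i, g]
  field_simp
  ring

end Staircase

theorem stmt_10_general
    (ε : ℝ) (hε : 0 < ε)
    (k : ℕ) (hk : 2 ≤ k)
    (v : Fin k → ℝ)
    (hvdp : ∀ i j, v i ≤ Real.exp ε * v j) :
    ∃ c : Finset (Fin k) → ℝ,
      (∀ S, 0 ≤ c S) ∧
      ∀ i, v i =
        ∑ S ∈ Finset.univ.filter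
            (fun S : Finset (Fin k) => S.Nonempty ∧ S ≠ Finset.univ),
          c S * (if i ∈ S then Real.exp ε else 1) := by
  have : Nontrivial (Fin k) := Fin.nontrivial_iff_two_le.mpr hk
  exact isStaircaseCombination_of_le_mul (Real.one_lt_exp_iff.mpr hε) hvdp

/-- For `ε > 0` and `k ≥ 2`, every nonnegative vector `v ∈ ℝ^k`
satisfying the `ε`-DP column constraints `v i ≤ e^ε · v j` is a nonnegative combination
of the staircase columns `w_S` (with `(w_S) i = e^ε` for `i ∈ S` and `1` otherwise),
indexed by the proper nonempty subsets `S` of `{1, ..., k}`. -/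
theorem stmt_10
    (ε : ℝ) (hε : 0 < ε)
    (k : ℕ) (hk : 2 ≤ k)
    (v : Fin k → ℝ)
    (hv0 : ∀ i, 0 ≤ v i)
    (hvdp : ∀ i j, v i ≤ Real.exp ε * v j) :
    ∃ c : Finset (Fin k) → ℝ,
      (∀ S, 0 ≤ c S) ∧
      ∀ i, v i =
        ∑ S ∈ Finset.univ.filter
            (fun S : Finset (Fin k) => S.Nonempty ∧ S ≠ Finset.univ),
          c S * (if i ∈ S then Real.exp ε else 1) :=
  stmt_10_general ε hε k hk v hvdp
end
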